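/- arXiv:1508.07931 — 5 statements merged into one kernel-verified Lean document; each statement's English description precedes it below -/
import Mathlib

section
/- For a uniformly random permutation R of {1,...,N}, given indices d < i < j, the probability that min over {1,...,i-1} of R is attained in {1,...,d}, and R(i) > R(i+1) > ... > R(j-1) forms a strictly decreasing (improving) run with each R(x) a left-to-right minimum for i ≤ x ≤ j-1, equals d·(i-2)!/(j-1)!. -/
/-!
Whether position `p` is a left-to-right minimum of `σ` depends only on the relative rank of `σ p`
among `σ 0, …, σ p`. Splitting off the last position identifies `Perm (Fin (M + 1))` with
`Fin (M + 1) × Perm (Fin M)`: the last position is a record iff `σ (last M) = 0`, and the other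
positions are records of `σ` iff they are records of the order-preserving relabelling of the
remaining values. Hence prescribing, position by position, "record", "not a record" or nothing
is counted by a product of `1`, `p` or `p + 1` over the positions `p`.

The event of the theorem is of this kind: the minimum of the first `i - 1` values lies among the
first `d` iff none of the positions `d, …, i - 2` is a record, and the run asks positions
`i - 1, …, j - 2` to be records. The product is
`d! · (d ⋯ (i - 2)) · (j ⋯ N) = d (i - 2)! N! / (j - 1)!`.
-/

open Finset Equiv
open scoped Nat

namespace Equiv.Perm

variable {M : ℕ}

def IsLeftToRightMin (σ : Perm (Fin M)) (p : Fin M) : Prop := ∀ m < p, σ p < σ m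

def dropLast (σ : Perm (Fin (M + 1))) : Perm (Fin M) :=
  (finSuccAboveEquiv (Fin.last M)).trans
    ((σ.subtypeEquiv fun x => (σ.injective.ne_iff : σ x ≠ σ (Fin.last M) ↔ _).symm).trans
      (finSuccAboveEquiv (σ (Fin.last M))).symm)

theorem succAbove_dropLast (σ : Perm (Fin (M + 1))) (k : Fin M) :
    (σ (Fin.last M)).succAbove (σ.dropLast k) = σ k.castSucc := by
  have := congrArg Subtype.val ((finSuccAboveEquiv (σ (Fin.last M))).apply_symm_apply
    ⟨σ k.castSucc, σ.injective.ne_iff.mpr (Fin.castSucc_ne_last k)⟩)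
  rw [finSuccAboveEquiv_apply] at this
  simpa only [dropLast, trans_apply, subtypeEquiv_apply, finSuccAboveEquiv_apply,
    Fin.succAbove_last] using this

theorem isLeftToRightMin_last_iff (σ : Perm (Fin (M + 1))) :
    σ.IsLeftToRightMin (Fin.last M) ↔ σ (Fin.last M) = 0 := by
  constructor
  · intro h
    by_contra h0
    have hne : σ.symm 0 ≠ Fin.last M := fun h' => h0 (by rw [← h', apply_symm_apply])
    simpa using h (σ.symm 0) (Fin.lt_last_iff_ne_last.mpr hne)
  · intro h m hm
    rw [h, Fin.pos_iff_ne_zero, ← h, σ.injective.ne_iff]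
    exact hm.ne

theorem isLeftToRightMin_castSucc_iff (σ : Perm (Fin (M + 1))) (k : Fin M) :
    σ.IsLeftToRightMin k.castSucc ↔ σ.dropLast.IsLeftToRightMin k := by
  simp only [IsLeftToRightMin, Fin.forall_fin_succ', Fin.castSucc_lt_castSucc_iff,
    ← succAbove_dropLast, Fin.succAbove_lt_succAbove_iff]
  simp [(Fin.castSucc_lt_last k).not_gt]

theorem injective_last_dropLast :
    Function.Injective fun σ : Perm (Fin (M + 1)) => (σ (Fin.last M), σ.dropLast) := by
  intro σ τ h
  simp only [Prod.mk.injEq] at h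
  ext p : 1
  induction p using Fin.lastCases with
  | last => rw [h.1]
  | cast k => rw [← succAbove_dropLast, ← succAbove_dropLast, h.1, h.2]

noncomputable def decomposeLast : Perm (Fin (M + 1)) ≃ Fin (M + 1) × Perm (Fin M) :=
  .ofBijective _ <| (Fintype.bijective_iff_injective_and_card _).mpr
    ⟨injective_last_dropLast, by simp [Fintype.card_perm, Nat.factorial_succ]⟩

@[simp]
theorem decomposeLast_apply (σ : Perm (Fin (M + 1))) :
    decomposeLast σ = (σ (Fin.last M), σ.dropLast) :=
  rfl

theorem forall_exists_lt_iff_forall_not_isLeftToRightMin (σ : Perm (Fin M)) (a b : ℕ) :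
    (∀ m : Fin M, a ≤ (m : ℕ) → (m : ℕ) < b → ∃ l : Fin M, (l : ℕ) < a ∧ σ l < σ m) ↔
      ∀ m : Fin M, a ≤ (m : ℕ) → (m : ℕ) < b → ¬ σ.IsLeftToRightMin m := by
  constructor
  · rintro h m h₁ h₂ hmin
    obtain ⟨l, hl, hlt⟩ := h m h₁ h₂
    exact (hmin l (Fin.lt_def.mpr (hl.trans_le h₁))).asymm hlt
  · intro h m h₁ h₂
    -- `l` is where `σ` attains its minimum over the positions `< b`
    obtain ⟨l, hl, hmin⟩ :=
      exists_min_image {t : Fin M | (t : ℕ) < b} σ ⟨m, by simpa using h₂⟩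
    rw [mem_filter_univ] at hl
    have hla : (l : ℕ) < a := by
      by_contra hla
      refine h l (not_lt.mp hla) hl fun t ht => ?_
      exact lt_of_le_of_ne (hmin t (by simpa using (Fin.lt_def.mp ht).trans hl))
        (σ.injective.ne ht.ne')
    refine ⟨l, hla, lt_of_le_of_ne (hmin m (by simpa using h₂)) ?_⟩
    exact σ.injective.ne (Fin.ne_of_val_ne (hla.trans_le h₁).ne)

end Equiv.Perm

inductive RecordConstraint
  | free
  | record
  | nonRecord

namespace RecordConstraint

def Holds : RecordConstraint → Prop → Prop
  | free, _ => True
  | record, P => P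
  | nonRecord, P => ¬P

/-- The number of values `v : Fin n` that the last of `n ≥ 1` positions may take, being a record
meaning `v = 0`. -/
def weight : RecordConstraint → ℕ → ℕ
  | free, n => n
  | record, _ => 1
  | nonRecord, n => n - 1

open scoped Classical in
theorem card_holds_eq_zero (c : RecordConstraint) (M : ℕ) :
    #{v : Fin (M + 1) | c.Holds (v = 0)} = c.weight (M + 1) := by
  cases c
  · rw [filter_congr (q := fun _ => True) (by simp [Holds])]
    simp [weight]
  · rw [filter_congr (q := (· = 0)) (by simp [Holds]), filter_eq']
    simp [weight]
  · rw [filter_congr (q := (· ≠ 0)) (by simp [Holds]), filter_ne']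
    simp [weight]

def gapRun (a b c p : ℕ) : RecordConstraint :=
  if p < a then free else if p < b then nonRecord else if p < c then record else free

theorem forall_holds_gapRun_iff {N a b c : ℕ} (hab : a ≤ b) (σ : Perm (Fin N)) :
    (∀ p : Fin N, (gapRun a b c p).Holds (σ.IsLeftToRightMin p)) ↔
      (∀ p : Fin N, a ≤ (p : ℕ) → (p : ℕ) < b → ¬ σ.IsLeftToRightMin p) ∧
        ∀ p : Fin N, b ≤ (p : ℕ) → (p : ℕ) < c → σ.IsLeftToRightMin p := by
  constructor
  · intro h
    refine ⟨fun p h₁ h₂ => ?_, fun p h₁ h₂ => ?_⟩ <;> have := h p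
    · simpa [gapRun, Holds, h₂, h₁.not_gt] using this
    · simpa [gapRun, Holds, h₂, h₁.not_gt, (hab.trans h₁).not_gt] using this
  · rintro ⟨hgap, hrun⟩ p
    unfold gapRun
    split_ifs with h₁ h₂ h₃
    · trivial
    · exact hgap p (not_lt.mp h₁) h₂
    · exact hrun p (not_lt.mp h₂) h₃
    · trivial

end RecordConstraint

open RecordConstraint Equiv.Perm

open scoped Classical in
theorem card_perm_forall_holds_isLeftToRightMin (c : ℕ → RecordConstraint) (M : ℕ) :
    #{σ : Perm (Fin M) | ∀ p : Fin M, (c p).Holds (σ.IsLeftToRightMin p)}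
      = ∏ p ∈ range M, (c p).weight (p + 1) := by
  induction M with
  | zero => simp
  | succ M ih =>
    rw [prod_range_succ, ← ih, ← card_holds_eq_zero, mul_comm, ← card_product]
    refine card_equiv decomposeLast fun σ => ?_
    simp only [mem_filter, mem_univ, true_and, mem_product, decomposeLast_apply,
      Fin.forall_fin_succ', isLeftToRightMin_castSucc_iff, isLeftToRightMin_last_iff,
      Fin.val_castSucc, Fin.val_last]
    exact and_comm

theorem Nat.factorial_mul_prod_Ico_add_one {m n : ℕ} (h : m ≤ n) :
    m ! * ∏ p ∈ Ico m n, (p + 1) = n ! := by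
  rw [← prod_range_add_one_eq_factorial, ← prod_range_add_one_eq_factorial,
    prod_range_mul_prod_Ico _ h]

theorem prod_weight_gapRun {N a b c : ℕ} (ha : 1 ≤ a) (hab : a ≤ b) (hbc : b ≤ c)
    (hcN : c ≤ N) :
    (∏ p ∈ range N, (gapRun a b c p).weight (p + 1)) * c ! = a * (b - 1)! * N ! := by
  rw [← prod_range_mul_prod_Ico _ hcN, ← prod_range_mul_prod_Ico _ hbc,
    ← prod_range_mul_prod_Ico _ hab]
  have hfree : ∏ p ∈ range a, (gapRun a b c p).weight (p + 1) = a ! := by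
    rw [← prod_range_add_one_eq_factorial]
    exact prod_congr rfl fun p hp => by simp [gapRun, weight, mem_range.mp hp]
  have hrun : ∏ p ∈ Ico b c, (gapRun a b c p).weight (p + 1) = 1 := by
    refine prod_eq_one fun p hp => ?_
    obtain ⟨h₁, h₂⟩ := mem_Ico.mp hp
    simp [gapRun, weight, h₂, h₁.not_gt, (hab.trans h₁).not_gt]
  have htail : ∏ p ∈ Ico c N, (gapRun a b c p).weight (p + 1) = ∏ p ∈ Ico c N, (p + 1) := by
    refine prod_congr rfl fun p hp => ?_
    obtain ⟨h₁, -⟩ := mem_Ico.mp hp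
    simp [gapRun, weight, h₁.not_gt, (hbc.trans h₁).not_gt,
      (hab.trans (hbc.trans h₁)).not_gt]
  obtain ⟨a, rfl⟩ := Nat.exists_eq_add_of_le' ha
  obtain ⟨b, rfl⟩ := Nat.exists_eq_add_of_le' (ha.trans hab)
  have hgap : ∏ p ∈ Ico (a + 1) (b + 1), (gapRun (a + 1) (b + 1) c p).weight (p + 1)
      = ∏ p ∈ Ico a b, (p + 1) := by
    rw [← prod_Ico_add' (fun p => (gapRun (a + 1) (b + 1) c p).weight (p + 1))]
    refine prod_congr rfl fun p hp => ?_
    obtain ⟨h₁, h₂⟩ := mem_Ico.mp hp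
    simp [gapRun, weight, h₂, h₁.not_gt]
  rw [hfree, hgap, hrun, htail, Nat.add_sub_cancel,
    ← Nat.factorial_mul_prod_Ico_add_one (Nat.le_of_succ_le_succ hab),
    ← Nat.factorial_mul_prod_Ico_add_one hcN, Nat.factorial_succ]
  ring

open scoped Classical in
/-- For a uniformly random permutation of `{1,...,N}` (0-indexed positions, smaller rank
better) and indices `d < i < j ≤ N`: the probability that the minimum over the first `i-1`
values is attained within the first `d`, and that for every `i ≤ x ≤ j-1` the applicant at
(1-based) index `x` is a left-to-right minimum (so `R(i) > R(i+1) > ⋯ > R(j-1)` forms a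
strictly improving run), equals `d·(i-2)!/(j-1)!`. -/
theorem stmt4 (N d i j : ℕ) (hd : 1 ≤ d) (hdi : d < i) (hij : i < j) (hjN : j ≤ N) :
    ((Finset.univ.filter (fun σ : Equiv.Perm (Fin N) =>
        (∀ m : Fin N, d ≤ (m : ℕ) → (m : ℕ) < i - 1 →
          ∃ l : Fin N, (l : ℕ) < d ∧ σ l < σ m) ∧
        (∀ (x : ℕ) (_hx1 : i ≤ x) (_hx2 : x ≤ j - 1),
          ∀ m : Fin N, (m : ℕ) < x - 1 → σ ⟨x - 1, by omega⟩ < σ m))).card : ℚ)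
        / (Nat.factorial N)
      = (d : ℚ) * (Nat.factorial (i - 2) : ℚ) / (Nat.factorial (j - 1) : ℚ) := by
  -- the run condition, in terms of the 0-based position `p = x - 1`
  have hrun (σ : Perm (Fin N)) :
      (∀ (x : ℕ) (_hx1 : i ≤ x) (_hx2 : x ≤ j - 1),
          ∀ m : Fin N, (m : ℕ) < x - 1 → σ ⟨x - 1, by omega⟩ < σ m) ↔
        ∀ p : Fin N, i - 1 ≤ (p : ℕ) → (p : ℕ) < j - 1 → σ.IsLeftToRightMin p :=
    ⟨fun h p h₁ h₂ m hm =>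
        by simpa using h (p + 1) (by omega) (by omega) m (by simpa using hm),
      fun h x h₁ h₂ m hm =>
        h _ (by dsimp only; omega) (by dsimp only; omega) m (Fin.lt_def.mpr hm)⟩
  rw [filter_congr fun σ _ => by
      rw [forall_exists_lt_iff_forall_not_isLeftToRightMin, hrun,
        ← forall_holds_gapRun_iff (c := j - 1) (by omega)],
    card_perm_forall_holds_isLeftToRightMin, div_eq_div_iff (by positivity) (by positivity)]
  have hprod := prod_weight_gapRun hd (by omega : d ≤ i - 1) (by omega : i - 1 ≤ j - 1)
    (by omega : j - 1 ≤ N)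
  rw [show i - 1 - 1 = i - 2 by omega] at hprod
  exact_mod_cast hprod
end

section
/- In the Best-1 sliding-window secretary problem with N applicants, window size K = 2, and threshold d ≥ 1, the probability of winning equals 2/N + (d/N) · Σ_{j=d+3}^{N} [ Σ_{i=d+1}^{j} (i-2)! ] / (j-1)!. -/
/-!
Let `b` be the (0-indexed) position of the best applicant. The interviewer wins iff `d ≤ b` and no
`m` with `d ≤ m ≤ b - 2` is a candidate, i.e. holds the minimum of the first `m + 2` positions.
Count the permutations with best at `b` and no such candidate, `g b`, by the position `p` of the
minimum of the first `b` positions, which is uniform on `[0, b)`: for `p < d` there is no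
candidate, for `d ≤ p ≤ b - 2` the position `p` is one, and for `p = b - 1` the condition reduces
to the one for `b - 1`. That condition depends only on the relative order of the first `b - 1`
positions, so it is independent of the event `p = b - 1`, of probability `1 / b`. Hence
`b * g b = d * (N - 1)! + g (b - 1)`, with `g d = g (d + 1) = (N - 1)!`; solving this recurrence
and summing over `b` gives the formula.
-/

/-- In the Best-1 sliding-window problem with window size `K = 2` (0-indexed positions,
smaller rank better), position `m` holds a *candidate* if its rank beats every
other applicant seen by the time the window front reaches `m`, i.e. every other
position `t < m + 2`. -/
def IsCandidateK2 (N : ℕ) (σ : Equiv.Perm (Fin N)) (m : Fin N) : Prop :=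
  ∀ t : Fin N, (t : ℕ) < (m : ℕ) + 2 → t ≠ m → σ m < σ t

/-- The interviewer rejects the first `d` applicants (0-indexed positions `< d`) and, by
the sliding rule, selects the first candidate at a position `≥ d`; she wins iff that
first candidate is the overall best applicant (rank `0`). -/
def WinK2 (N d : ℕ) (σ : Equiv.Perm (Fin N)) : Prop :=
  ∃ m : Fin N, d ≤ (m : ℕ) ∧ IsCandidateK2 N σ m ∧ (σ m : ℕ) = 0 ∧
    ∀ m' : Fin N, d ≤ (m' : ℕ) → (m' : ℕ) < (m : ℕ) → ¬ IsCandidateK2 N σ m'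

open Finset Equiv
open scoped Nat

namespace SlidingWindowSecretary

open scoped Classical

variable {N : ℕ}

theorem card_filter_mul_swap (P : Perm (Fin N) → Prop) [DecidablePred P] (x y : Fin N) :
    #{σ | P (σ * swap x y)} = #{σ | P σ} :=
  card_equiv (Equiv.mulRight (swap x y)) (by simp)

theorem card_filter_symm_apply_eq (a b : Fin N) :
    #{σ : Perm (Fin N) | σ.symm a = b} = (N - 1)! := by
  have hN : 0 < N := b.pos
  have hfiber : ∀ c : Fin N,
      #{σ : Perm (Fin N) | σ.symm a = c} = #{σ : Perm (Fin N) | σ.symm a = b} := fun c => by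
    rw [← card_filter_mul_swap _ b c]
    congr! 2 with σ
    simp [Perm.mul_def, swap_apply_eq_iff]
  have hsum := card_eq_sum_card_fiberwise (s := (univ : Finset (Perm (Fin N))))
    (t := univ) (f := fun σ => σ.symm a) (fun _ _ => mem_univ _)
  simp only [card_univ, Fintype.card_perm, Fintype.card_fin, hfiber, sum_const,
    smul_eq_mul] at hsum
  rw [← Nat.mul_factorial_pred hN.ne'] at hsum
  exact (Nat.eq_of_mul_eq_mul_left hN hsum).symm


def NoEarlyCandidate (N d : ℕ) (σ : Perm (Fin N)) (k : ℕ) : Prop :=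
  ∀ m : Fin N, d ≤ m → (m : ℕ) + 2 ≤ k → ¬ IsCandidateK2 N σ m

variable {d : ℕ} {σ τ : Perm (Fin N)}

theorem winK2_iff [NeZero N] :
    WinK2 N d σ ↔ d ≤ (σ.symm 0 : ℕ) ∧ NoEarlyCandidate N d σ (σ.symm 0) := by
  have hbest : ∀ m, (σ m : ℕ) = 0 ↔ m = σ.symm 0 := by
    simp [eq_symm_apply]
  constructor
  · rintro ⟨m, hdm, -, hm0, hfirst⟩
    obtain rfl := (hbest m).1 hm0
    exact ⟨hdm, fun m' hdm' hm' => hfirst m' hdm' (by omega)⟩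
  · rintro ⟨hd, hnc⟩
    refine ⟨σ.symm 0, hd, fun t _ ht => ?_, by simp, fun m' hdm' hm' hcand => ?_⟩
    · simpa [Fin.pos_iff_ne_zero, eq_symm_apply] using ht
    · by_cases hm'2 : (m' : ℕ) + 2 ≤ σ.symm 0
      · exact hnc m' hdm' hm'2 hcand
      · have := hcand (σ.symm 0) (by omega) (by omega)
        simp at this

theorem noEarlyCandidate_of_le {k : ℕ} (hk : k ≤ d + 1) : NoEarlyCandidate N d σ k :=
  fun _ _ _ => by omega

theorem noEarlyCandidate_congr {k : ℕ}
    (h : ∀ x y : Fin N, (x : ℕ) < k → (y : ℕ) < k → (σ x < σ y ↔ τ x < τ y)) :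
    NoEarlyCandidate N d σ k ↔ NoEarlyCandidate N d τ k := by
  have key : ∀ m : Fin N, (m : ℕ) + 2 ≤ k → (IsCandidateK2 N σ m ↔ IsCandidateK2 N τ m) :=
    fun m hm => forall₃_congr fun t ht _ => h m t (by omega) (by omega)
  exact forall₃_congr fun m _ hm => not_congr (key m hm)

def IsPrefixMin (σ : Perm (Fin N)) (b p : Fin N) : Prop :=
  p < b ∧ ∀ t < b, t ≠ p → σ p < σ t

variable {b p : Fin N}

theorem IsPrefixMin.noEarlyCandidate (hp : IsPrefixMin σ b p) (hpd : (p : ℕ) < d) :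
    NoEarlyCandidate N d σ b := fun m hdm hmb hcand =>
  lt_asymm (hcand p (by omega) (by omega)) (hp.2 m (by omega) (by omega))

theorem IsPrefixMin.not_noEarlyCandidate (hp : IsPrefixMin σ b p) (hdp : d ≤ (p : ℕ))
    (hpb : (p : ℕ) + 2 ≤ b) : ¬ NoEarlyCandidate N d σ b := fun hnc =>
  hnc p hdp hpb fun t ht htp => hp.2 t (by omega) htp

theorem IsPrefixMin.noEarlyCandidate_iff (hp : IsPrefixMin σ b p) (hpb : (p : ℕ) + 1 = b) :
    NoEarlyCandidate N d σ b ↔ NoEarlyCandidate N d σ p := by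
  refine ⟨fun h m hdm hm => h m hdm (by omega), fun h m hdm hm hcand => ?_⟩
  by_cases hm' : (m : ℕ) + 2 ≤ p
  · exact h m hdm hm' hcand
  · exact lt_asymm (hcand p (by omega) (by omega)) (hp.2 m (by omega) (by omega))

theorem IsPrefixMin.unique {q : Fin N} (hp : IsPrefixMin σ b p) (hq : IsPrefixMin σ b q) :
    p = q := by
  by_contra hpq
  exact lt_asymm (hp.2 q hq.1 (Ne.symm hpq)) (hq.2 p hp.1 hpq)

theorem exists_isPrefixMin (hb : 0 < (b : ℕ)) (σ : Perm (Fin N)) :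
    ∃ p, IsPrefixMin σ b p := by
  obtain ⟨p, hp, hmin⟩ :=
    (Iio b).exists_min_image σ ⟨⟨0, b.pos⟩, by simpa [Fin.lt_def] using hb⟩
  refine ⟨p, mem_Iio.1 hp, fun t ht htp => (hmin t (mem_Iio.2 ht)).lt_of_ne ?_⟩
  exact fun h => htp (σ.injective h).symm

theorem card_eq_sum_card_isPrefixMin (P : Perm (Fin N) → Prop) [DecidablePred P]
    (hb : 0 < (b : ℕ)) :
    #{σ | P σ} = ∑ p ∈ Iio b, #{σ | P σ ∧ IsPrefixMin σ b p} := by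
  rw [← card_biUnion]
  · congr 1
    ext σ
    obtain ⟨p, hp⟩ := exists_isPrefixMin hb σ
    simp only [mem_filter, mem_univ, true_and, mem_biUnion, mem_Iio]
    exact ⟨fun hP => ⟨p, hp.1, hP, hp⟩, fun ⟨_, _, hP, _⟩ => hP⟩
  · intro p _ q _ hpq
    simp only [disjoint_left, mem_filter, mem_univ, true_and]
    exact fun σ hp hq => hpq (hp.2.unique hq.2)

theorem isPrefixMin_mul_swap {p' : Fin N} (hp : p < b) (hp' : p' < b) :
    IsPrefixMin (σ * swap p p') b p ↔ IsPrefixMin σ b p' := by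
  simp only [IsPrefixMin, Perm.mul_apply, swap_apply_left, hp, hp', true_and]
  refine (swap p p').forall_congr fun {t} => ?_
  have hlt : swap p p' t < b ↔ t < b := by rw [swap_apply_def]; split_ifs <;> simp_all
  rw [hlt, Ne, Ne, swap_apply_eq_iff, swap_apply_right]

theorem mul_card_isPrefixMin [NeZero N] (hp : p < b) :
    b * #{σ : Perm (Fin N) | σ.symm 0 = b ∧ IsPrefixMin σ b p} = (N - 1)! := by
  have hcongr : ∀ q < b, #{σ : Perm (Fin N) | σ.symm 0 = b ∧ IsPrefixMin σ b q}
      = #{σ : Perm (Fin N) | σ.symm 0 = b ∧ IsPrefixMin σ b p} := fun q hq => by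
    rw [← card_filter_mul_swap _ q p]
    congr! 2 with σ
    rw [isPrefixMin_mul_swap hq hp]
    simp [Perm.mul_def, swap_apply_eq_iff, swap_apply_of_ne_of_ne hq.ne' hp.ne']
  calc b * #{σ : Perm (Fin N) | σ.symm 0 = b ∧ IsPrefixMin σ b p}
      = ∑ q ∈ Iio b, #{σ : Perm (Fin N) | σ.symm 0 = b ∧ IsPrefixMin σ b q} := by
        rw [sum_congr rfl fun q hq => hcongr q (mem_Iio.1 hq), sum_const, Fin.card_Iio,
          smul_eq_mul]
    _ = (N - 1)! := by
        rw [← card_eq_sum_card_isPrefixMin _ ((Nat.zero_le _).trans_lt hp),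
          card_filter_symm_apply_eq]

section Rank

variable (S : Finset (Fin N))

def rankIn (σ : Perm (Fin N)) (x : Fin N) : ℕ := #{s ∈ S | σ s < σ x}

variable {S} {i : ℕ} {j q x y : Fin N}

theorem rankIn_le_rankIn (h : σ x ≤ σ y) : rankIn S σ x ≤ rankIn S σ y :=
  card_le_card (monotone_filter_right _ fun _ _ hs => hs.trans_le h)

theorem rankIn_lt_rankIn (hx : x ∈ S) (h : σ x < σ y) : rankIn S σ x < rankIn S σ y :=
  card_lt_card ((ssubset_iff_of_subset (monotone_filter_right _ fun _ _ hs => hs.trans h)).2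
    ⟨x, by simp [hx, h], by simp⟩)

theorem rankIn_lt_card (hx : x ∈ S) : rankIn S σ x < #S :=
  card_lt_card (filter_ssubset.2 ⟨x, hx, lt_irrefl _⟩)

theorem rankIn_injOn : Set.InjOn (rankIn S σ) S := fun x hx y hy h => by
  rcases lt_trichotomy (σ x) (σ y) with hlt | heq | hgt
  · exact absurd h (rankIn_lt_rankIn hx hlt).ne
  · exact σ.injective heq
  · exact absurd h (rankIn_lt_rankIn hy hgt).ne'

theorem exists_rankIn_eq (hi : i < #S) : ∃ q ∈ S, rankIn S σ q = i := by
  have himage : S.image (rankIn S σ) = range #S := by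
    refine eq_of_subset_of_card_le (fun r hr => ?_) ?_
    · obtain ⟨x, hx, rfl⟩ := mem_image.1 hr
      exact mem_range.2 (rankIn_lt_card hx)
    · rw [card_image_of_injOn rankIn_injOn, card_range]
  rw [← mem_range, ← himage] at hi
  simpa using hi

theorem lt_iff_rankIn_le (hj : j ∉ S) (hq : q ∈ S) :
    σ j < σ q ↔ rankIn S σ j ≤ rankIn S σ q := by
  refine ⟨fun h => rankIn_le_rankIn h.le, fun h => ?_⟩
  by_contra hn
  have hqj : σ q < σ j := (not_lt.1 hn).lt_of_ne (σ.injective.ne (ne_of_mem_of_not_mem hq hj))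
  exact (rankIn_lt_rankIn hq hqj).not_ge h

theorem rankIn_eq_zero_iff (hj : j ∉ S) : rankIn S σ j = 0 ↔ ∀ s ∈ S, σ j < σ s := by
  simp only [rankIn, card_eq_zero, filter_eq_empty_iff, not_lt]
  exact forall₂_congr fun s hs =>
    ⟨fun h => h.lt_of_ne (σ.injective.ne (ne_of_mem_of_not_mem hs hj)).symm, le_of_lt⟩

theorem mul_swap_apply_of_mem (hj : j ∉ S) (hx : x ∈ S) :
    (σ * swap j q) x = if x = q then σ j else σ x := by
  rw [Perm.mul_apply, swap_apply_def, if_neg (ne_of_mem_of_not_mem hx hj)]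
  split_ifs <;> rfl

theorem rankIn_mul_swap_self (hj : j ∉ S) (hq : q ∈ S) :
    rankIn S (σ * swap j q) j = rankIn S σ q + if σ j < σ q then 1 else 0 := by
  have herase : ∀ s ∈ S.erase q, (σ * swap j q) s = σ s := fun s hs => by
    rw [mul_swap_apply_of_mem hj (mem_of_mem_erase hs), if_neg (ne_of_mem_erase hs)]
  simp only [rankIn, card_filter, Perm.mul_apply, swap_apply_left]
  rw [← add_sum_erase S _ hq, ← add_sum_erase S _ hq, sum_congr rfl fun s hs => by
    rw [← Perm.mul_apply, herase s hs]]
  simp [add_comm]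

theorem mul_swap_lt_iff (hj : j ∉ S) (hadj : ∀ s ∈ S, s ≠ q → (σ s < σ j ↔ σ s < σ q))
    (hx : x ∈ S) (hy : y ∈ S) : (σ * swap j q) x < (σ * swap j q) y ↔ σ x < σ y := by
  have hxj : σ x ≠ σ j := σ.injective.ne (ne_of_mem_of_not_mem hx hj)
  have hyj : σ y ≠ σ j := σ.injective.ne (ne_of_mem_of_not_mem hy hj)
  rw [mul_swap_apply_of_mem hj hx, mul_swap_apply_of_mem hj hy]
  split_ifs with hxq hyq hyq
  · subst hxq hyq; simp
  · subst hxq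
    have := hadj y hy hyq
    have := σ.injective.ne hyq
    grind
  · subst hyq
    have := hadj x hx hxq
    grind
  · rfl

theorem adjacent_of_rankIn (hj : j ∉ S) (hq : q ∈ S) (h : rankIn S σ q ≤ rankIn S σ j)
    (h' : rankIn S σ j ≤ rankIn S σ q + 1) : ∀ s ∈ S, s ≠ q → (σ s < σ j ↔ σ s < σ q) := by
  intro s hs hsq
  have hsj : σ s ≠ σ j := σ.injective.ne (ne_of_mem_of_not_mem hs hj)
  constructor
  · intro hlt
    by_contra hn
    have hqs : σ q < σ s := (not_lt.1 hn).lt_of_ne (σ.injective.ne hsq).symm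
    have := rankIn_lt_rankIn hq hqs
    have := rankIn_lt_rankIn hs hlt
    omega
  · intro hlt
    by_contra hn
    have hjs : σ j < σ s := (not_lt.1 hn).lt_of_ne hsj.symm
    have := rankIn_le_rankIn (S := S) hjs.le
    have := rankIn_lt_rankIn hs hlt
    omega

variable (S) in
/-- Swapping the value at `j` with the value of `S`-rank `i` moves `j` between the `S`-ranks `i`
and `i + 1`; as the two values are adjacent among the values on `S`, the relative order on `S` is
kept, so this is an involution exchanging the two levels. -/
noncomputable def rankSwap (j : Fin N) (i : ℕ) (σ : Perm (Fin N)) : Perm (Fin N) :=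
  if h : ∃ q ∈ S, rankIn S σ q = i then σ * swap j h.choose else σ

theorem rankSwap_eq (hq : q ∈ S) (hqi : rankIn S σ q = i) :
    rankSwap S j i σ = σ * swap j q := by
  have h : ∃ q ∈ S, rankIn S σ q = i := ⟨q, hq, hqi⟩
  rw [rankSwap, dif_pos h, rankIn_injOn h.choose_spec.1 hq (h.choose_spec.2.trans hqi.symm)]

theorem rankSwap_spec (hj : j ∉ S) (hi : i < #S) (hσ : i ≤ rankIn S σ j)
    (hσ' : rankIn S σ j ≤ i + 1) :
    (∀ x ∈ S, ∀ y ∈ S, rankSwap S j i σ x < rankSwap S j i σ y ↔ σ x < σ y) ∧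
    (∀ x ∉ S, x ≠ j → rankSwap S j i σ x = σ x) ∧
    rankIn S (rankSwap S j i σ) j = (if rankIn S σ j = i then i + 1 else i) ∧
    rankSwap S j i (rankSwap S j i σ) = σ := by
  obtain ⟨q, hq, hqi⟩ := exists_rankIn_eq (σ := σ) hi
  have horder : ∀ x ∈ S, ∀ y ∈ S, (σ * swap j q) x < (σ * swap j q) y ↔ σ x < σ y :=
    fun x hx y hy => mul_swap_lt_iff hj (adjacent_of_rankIn hj hq (by omega) (by omega)) hx hy
  have hqi' : rankIn S (σ * swap j q) q = i := by
    rw [← hqi]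
    exact congrArg card (filter_congr fun s hs => horder s hs q hq)
  rw [rankSwap_eq hq hqi]
  refine ⟨horder, fun x hx hxj => ?_, ?_, ?_⟩
  · rw [Perm.mul_apply, swap_apply_of_ne_of_ne hxj (ne_of_mem_of_not_mem hq hx).symm]
  · have := lt_iff_rankIn_le hj hq (σ := σ)
    rw [rankIn_mul_swap_self hj hq, hqi]
    split_ifs <;> omega
  · rw [rankSwap_eq hq hqi', mul_assoc, swap_mul_self, mul_one]

theorem card_rankIn_eq_succ (P : Perm (Fin N) → Prop) [DecidablePred P]
    (hP : ∀ σ τ : Perm (Fin N), (∀ x ∈ S, ∀ y ∈ S, τ x < τ y ↔ σ x < σ y) →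
      (∀ x ∉ S, x ≠ j → τ x = σ x) → P σ → P τ)
    (hj : j ∉ S) (hi : i < #S) :
    #{σ | P σ ∧ rankIn S σ j = i} = #{σ | P σ ∧ rankIn S σ j = i + 1} := by
  have hmaps : ∀ σ, P σ → i ≤ rankIn S σ j → rankIn S σ j ≤ i + 1 →
      P (rankSwap S j i σ) ∧
        rankIn S (rankSwap S j i σ) j = (if rankIn S σ j = i then i + 1 else i) :=
    fun σ hPσ h h' =>
      have hspec := rankSwap_spec hj hi h h'
      ⟨hP _ _ hspec.1 hspec.2.1 hPσ, hspec.2.2.1⟩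
  refine card_nbij' (rankSwap S j i) (rankSwap S j i) ?_ ?_ ?_ ?_ <;> intro σ hσ <;>
    simp only [coe_filter, mem_univ, true_and, Set.mem_ofPred_eq] at hσ ⊢
  · simpa [hσ.2] using hmaps σ hσ.1 hσ.2.ge (by omega)
  · simpa [hσ.2] using hmaps σ hσ.1 (by omega) hσ.2.le
  · exact (rankSwap_spec hj hi hσ.2.ge (by omega)).2.2.2
  · exact (rankSwap_spec hj hi (by omega) hσ.2.le).2.2.2

theorem succ_card_mul_card_rankIn_eq_zero (P : Perm (Fin N) → Prop) [DecidablePred P]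
    (hP : ∀ σ τ : Perm (Fin N), (∀ x ∈ S, ∀ y ∈ S, τ x < τ y ↔ σ x < σ y) →
      (∀ x ∉ S, x ≠ j → τ x = σ x) → P σ → P τ)
    (hj : j ∉ S) :
    (#S + 1) * #{σ | P σ ∧ rankIn S σ j = 0} = #{σ | P σ} := by
  have hlevel : ∀ i ≤ #S, #{σ | P σ ∧ rankIn S σ j = i} = #{σ | P σ ∧ rankIn S σ j = 0} := by
    intro i
    induction i with
    | zero => simp
    | succ i ih =>
      exact fun hi => by rw [← card_rankIn_eq_succ P hP hj (by omega), ih (by omega)]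
  calc (#S + 1) * #{σ | P σ ∧ rankIn S σ j = 0}
      = ∑ i ∈ range (#S + 1), #{σ | P σ ∧ rankIn S σ j = i} := by
        rw [sum_congr rfl fun i hi => hlevel i (Nat.le_of_lt_succ (mem_range.1 hi)), sum_const,
          card_range, smul_eq_mul]
    _ = #{σ | P σ} := by
        rw [card_eq_sum_card_fiberwise (f := fun σ => rankIn S σ j) (t := range (#S + 1))
          fun σ _ => mem_range.2 (Nat.lt_succ_of_le (card_filter_le _ _))]
        simp only [filter_filter]

end Rank

theorem card_symm_eq_noEarlyCandidate [NeZero N] {k : ℕ} {x y : Fin N} (hx : k ≤ x)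
    (hy : k ≤ y) :
    #{σ : Perm (Fin N) | σ.symm 0 = x ∧ NoEarlyCandidate N d σ k}
      = #{σ : Perm (Fin N) | σ.symm 0 = y ∧ NoEarlyCandidate N d σ k} := by
  rw [← card_filter_mul_swap _ x y]
  congr! 2 with σ
  refine and_congr (by simp [Perm.mul_def, swap_apply_eq_iff]) (noEarlyCandidate_congr ?_).symm
  intro t u ht hu
  rw [Perm.mul_apply, Perm.mul_apply, swap_apply_of_ne_of_ne (by omega) (by omega),
    swap_apply_of_ne_of_ne (by omega) (by omega)]

theorem mul_card_isPrefixMin_noEarlyCandidate [NeZero N] {bm : Fin N} (hb : (bm : ℕ) + 1 = b) :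
    b * #{σ : Perm (Fin N) | σ.symm 0 = b ∧ IsPrefixMin σ b bm ∧ NoEarlyCandidate N d σ bm}
      = #{σ : Perm (Fin N) | σ.symm 0 = b ∧ NoEarlyCandidate N d σ bm} := by
  have hS : bm ∉ Iio bm := by simp
  have key := succ_card_mul_card_rankIn_eq_zero
    (fun σ : Perm (Fin N) => σ.symm 0 = b ∧ NoEarlyCandidate N d σ bm) ?_ hS
  · rw [Fin.card_Iio, hb] at key
    rw [← key]
    congr 2
    refine filter_congr fun σ _ => ?_
    rw [rankIn_eq_zero_iff hS, and_assoc]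
    refine and_congr_right fun _ => ?_
    rw [and_comm]
    refine and_congr_right fun _ => ?_
    simp only [IsPrefixMin, mem_Iio]
    exact ⟨fun h s hs => h.2 s (by omega) (by omega),
      fun h => ⟨by omega, fun t ht htbm => h t (by omega)⟩⟩
  · rintro σ τ horder hout ⟨hσb, hσ⟩
    refine ⟨?_, (noEarlyCandidate_congr fun x y hx hy => ?_).1 hσ⟩
    · rw [symm_apply_eq, hout b (by simp; omega) (by omega), ← symm_apply_eq, hσb]
    · exact (horder x (mem_Iio.2 hx) y (mem_Iio.2 hy)).symm

variable (N d) in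
noncomputable def noEarlyCount [NeZero N] (k : ℕ) : ℕ :=
  #{σ : Perm (Fin N) | (σ.symm 0 : ℕ) = k ∧ NoEarlyCandidate N d σ k}

theorem noEarlyCount_val [NeZero N] (b : Fin N) :
    noEarlyCount N d b = #{σ : Perm (Fin N) | σ.symm 0 = b ∧ NoEarlyCandidate N d σ b} := by
  simp only [noEarlyCount, Fin.val_inj]

theorem noEarlyCount_of_le [NeZero N] {k : ℕ} (hk : k < N) (hkd : k ≤ d + 1) :
    noEarlyCount N d k = (N - 1)! := by
  have := noEarlyCount_val (d := d) (⟨k, hk⟩ : Fin N)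
  simp only [noEarlyCandidate_of_le hkd, and_true] at this
  rw [this, card_filter_symm_apply_eq]

theorem mul_card_isPrefixMin_pred [NeZero N] {bm : Fin N} (hb : (bm : ℕ) + 1 = b) :
    b * #{σ : Perm (Fin N) | (σ.symm 0 = b ∧ NoEarlyCandidate N d σ b) ∧ IsPrefixMin σ b bm}
      = noEarlyCount N d bm := by
  rw [noEarlyCount_val, ← card_symm_eq_noEarlyCandidate (x := b) (by omega) le_rfl,
    ← mul_card_isPrefixMin_noEarlyCandidate hb]
  congr 2
  exact filter_congr fun σ _ =>
    ⟨fun ⟨⟨h0, hσ⟩, hmin⟩ => ⟨h0, hmin, (hmin.noEarlyCandidate_iff hb).1 hσ⟩,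
      fun ⟨h0, hmin, hσ⟩ => ⟨⟨h0, (hmin.noEarlyCandidate_iff hb).2 hσ⟩, hmin⟩⟩

theorem succ_mul_noEarlyCount [NeZero N] {bm : Fin N} (hb : (bm : ℕ) + 1 = b)
    (hdb : d + 2 ≤ (b : ℕ)) :
    b * noEarlyCount N d b = d * (N - 1)! + noEarlyCount N d bm := by
  have hlow : ∀ p ∈ (Iio b).filter (fun p : Fin N => (p : ℕ) < d),
      b * #{σ : Perm (Fin N) | (σ.symm 0 = b ∧ NoEarlyCandidate N d σ b) ∧ IsPrefixMin σ b p}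
        = (N - 1)! := fun p hp => by
    simp only [mem_filter, mem_Iio] at hp
    rw [← mul_card_isPrefixMin hp.1]
    congr 2
    exact filter_congr fun σ _ =>
      ⟨fun h => ⟨h.1.1, h.2⟩, fun h => ⟨⟨h.1, h.2.noEarlyCandidate hp.2⟩, h.2⟩⟩
  have hcard_low : #((Iio b).filter (fun p : Fin N => (p : ℕ) < d)) = d := by
    have : (Iio b).filter (fun p : Fin N => (p : ℕ) < d)
        = univ.filter (fun p : Fin N => (p : ℕ) < d) := by
      ext p
      simp only [mem_filter, mem_Iio, mem_univ, true_and, and_iff_right_iff_imp]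
      omega
    rw [this, Fin.card_filter_val_lt, min_eq_right (by omega)]
  have hmid : ∀ p ∈ (Iio b).filter (fun p : Fin N => ¬ (p : ℕ) < d), p ≠ bm →
      b * #{σ : Perm (Fin N) | (σ.symm 0 = b ∧ NoEarlyCandidate N d σ b) ∧ IsPrefixMin σ b p}
        = 0 := fun p hp hpbm => by
    simp only [mem_filter, mem_Iio, not_lt] at hp
    have hpb : (p : ℕ) + 2 ≤ b := by
      have : (p : ℕ) ≠ bm := Fin.val_ne_of_ne hpbm
      omega
    rw [filter_false_of_mem fun σ _ h => h.2.not_noEarlyCandidate hp.2 hpb h.1.2, card_empty,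
      mul_zero]
  rw [noEarlyCount_val, card_eq_sum_card_isPrefixMin (b := b) _ (by omega), mul_sum,
    ← sum_filter_add_sum_filter_not (Iio b) (fun p : Fin N => (p : ℕ) < d), sum_congr rfl hlow,
    sum_const, hcard_low, smul_eq_mul, sum_eq_single_of_mem bm (by simp; omega) hmid,
    mul_card_isPrefixMin_pred hb]

theorem card_winK2_eq_sum [NeZero N] :
    #{σ : Perm (Fin N) | WinK2 N d σ} = ∑ k ∈ Ico d N, noEarlyCount N d k := by
  rw [card_eq_sum_card_fiberwise (f := fun σ => (σ.symm 0 : ℕ)) (t := Ico d N) fun σ hσ =>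
    mem_Ico.2 ⟨(winK2_iff.1 (mem_filter.1 hσ).2).1, (σ.symm 0).isLt⟩]
  refine sum_congr rfl fun k hk => ?_
  rw [filter_filter]
  exact congrArg card (filter_congr fun σ _ => by
    rw [winK2_iff]
    constructor
    · rintro ⟨⟨-, h⟩, rfl⟩
      exact ⟨rfl, h⟩
    · rintro ⟨rfl, h⟩
      exact ⟨⟨(mem_Ico.1 hk).1, h⟩, rfl⟩)

variable (N d) in
noncomputable def noEarlyProb [NeZero N] (k : ℕ) : ℚ := noEarlyCount N d k / (N - 1)!

theorem noEarlyProb_of_le [NeZero N] {k : ℕ} (hk : k < N) (hkd : k ≤ d + 1) :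
    noEarlyProb N d k = 1 := by
  simp [noEarlyProb, noEarlyCount_of_le hk hkd, Nat.factorial_ne_zero]

theorem succ_mul_noEarlyProb [NeZero N] {k : ℕ} (hk : d + 1 ≤ k) (hkN : k + 1 < N) :
    (k + 1) * noEarlyProb N d (k + 1) = d + noEarlyProb N d k := by
  have h := succ_mul_noEarlyCount (d := d) (bm := ⟨k, by omega⟩) (b := ⟨k + 1, hkN⟩) rfl
    (by simp only; omega)
  have hq : ((k : ℚ) + 1) * noEarlyCount N d (k + 1) = d * (N - 1)! + noEarlyCount N d k := by
    exact_mod_cast h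
  simp only [noEarlyProb]
  field_simp
  linear_combination hq

theorem card_winK2_div_factorial [NeZero N] :
    (#{σ : Perm (Fin N) | WinK2 N d σ} : ℚ) / N ! = (∑ k ∈ Ico d N, noEarlyProb N d k) / N := by
  rw [card_winK2_eq_sum, ← Nat.mul_factorial_pred (NeZero.ne N), Nat.cast_sum, Nat.cast_mul,
    sum_div, sum_div]
  exact sum_congr rfl fun _ _ => div_mul_eq_div_div_swap _ _ _

theorem eq_mul_sum_factorial_div_of_recurrence {d n : ℕ} (hd : 1 ≤ d) (r : ℕ → ℚ)
    (hr : r (d + 1) = 1) (hrec : ∀ k, d + 1 ≤ k → k + 1 < n → (k + 1) * r (k + 1) = d + r k) :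
    ∀ k, d + 1 ≤ k → k < n →
      r k = d * ((∑ i ∈ Icc (d + 1) (k + 1), ((i - 2)! : ℚ)) / k !) := by
  intro k hk
  induction k, hk using Nat.le_induction with
  | base =>
    intro _
    rw [hr, sum_Icc_succ_top (by omega), Icc_self, sum_singleton]
    obtain ⟨d, rfl⟩ : ∃ d', d = d' + 1 := ⟨d - 1, by omega⟩
    simp only [show d + 1 + 1 - 2 = d by omega, show d + 1 + 1 + 1 - 2 = d + 1 by omega,
      Nat.factorial_succ]
    push_cast
    field_simp
    ring
  | succ k hk ih =>
    intro hkn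
    have h := hrec k hk hkn
    rw [ih (by omega)] at h
    rw [sum_Icc_succ_top (by omega), show k + 1 + 1 - 2 = k by omega, Nat.factorial_succ]
    push_cast
    field_simp at h ⊢
    linear_combination h

theorem sum_Ico_eq_of_recurrence {d n : ℕ} (hd : 1 ≤ d) (hdn : d + 2 ≤ n) (r : ℕ → ℚ)
    (h₀ : r d = 1) (h₁ : r (d + 1) = 1)
    (hrec : ∀ k, d + 1 ≤ k → k + 1 < n → (k + 1) * r (k + 1) = d + r k) :
    ∑ k ∈ Ico d n, r k
      = 2 + d * ∑ j ∈ Icc (d + 3) n, (∑ i ∈ Icc (d + 1) j, ((i - 2)! : ℚ)) / (j - 1)! := by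
  have hclosed := eq_mul_sum_factorial_div_of_recurrence hd r h₁ hrec
  rw [sum_eq_sum_Ico_succ_bot (by omega), sum_eq_sum_Ico_succ_bot (by omega), h₀, h₁,
    sum_congr rfl fun k hk => hclosed k (by simp at hk; omega) (mem_Ico.1 hk).2, ← mul_sum,
    ← Ico_add_one_right_eq_Icc, show d + 3 = d + 1 + 1 + 1 by rfl, ← sum_Ico_add' _ _ n 1]
  simp only [Nat.add_sub_cancel]
  ring

end SlidingWindowSecretary

open SlidingWindowSecretary

open scoped Classical in
/-- Best-1 sliding-window secretary problem with `N` applicants, window size `K = 2`,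
threshold `d ≥ 1`: the probability of winning equals
`2/N + (d/N)·Σ_{j=d+3}^{N} (Σ_{i=d+1}^{j} (i-2)!)/(j-1)!`. -/
theorem stmt5 (N d : ℕ) (hd : 1 ≤ d) (hdN : d + 2 ≤ N) :
    ((Finset.univ.filter (fun σ : Equiv.Perm (Fin N) => WinK2 N d σ)).card : ℚ)
        / (Nat.factorial N)
      = 2 / (N : ℚ) + ((d : ℚ) / (N : ℚ)) *
          ∑ j ∈ Finset.Icc (d + 3) N,
            (∑ i ∈ Finset.Icc (d + 1) j, (Nat.factorial (i - 2) : ℚ))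
              / (Nat.factorial (j - 1) : ℚ) := by
  have : NeZero N := ⟨by omega⟩
  rw [card_winK2_div_factorial, sum_Ico_eq_of_recurrence hd hdN (noEarlyProb N d)
    (noEarlyProb_of_le (by omega) (by omega)) (noEarlyProb_of_le (by omega) le_rfl)
    fun k hk hkN => succ_mul_noEarlyProb hk hkN]
  ring
end

section
/- In the Best-1 sliding-window secretary problem with window size K ≥ N/2 and threshold d = 0, the probability of winning equals K/N + (1/N) Σ_{j=K+1}^{N} (1 − Σ_{m=1}^{j-K} 1/(m+K−1)). -/
/-- In the Best-1 sliding-window problem with window size `K` (0-indexed positions,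
smaller rank better), position `m` holds a *candidate* if its rank beats every other
applicant seen by the time the window front reaches `m`, i.e. every other position
`t < m + K`. -/
def IsCandidate (N K : ℕ) (σ : Equiv.Perm (Fin N)) (m : Fin N) : Prop :=
  ∀ t : Fin N, (t : ℕ) < (m : ℕ) + K → t ≠ m → σ m < σ t

/-- With threshold `d = 0` the interviewer selects the very first candidate (sliding
rule); she wins iff that candidate is the overall best applicant (rank `0`). -/
def WinD0 (N K : ℕ) (σ : Equiv.Perm (Fin N)) : Prop :=
  ∃ m : Fin N, IsCandidate N K σ m ∧ (σ m : ℕ) = 0 ∧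
    ∀ m' : Fin N, (m' : ℕ) < (m : ℕ) → ¬ IsCandidate N K σ m'

/-!
Condition on the position `p` of the best applicant; each position carries `(N-1)!` of the `N!`
orders. Given that, the interviewer wins iff no position `m` with `m + K ≤ p` holds a candidate.
Since `N ≤ 2K`, any two such positions lie in each other's windows, so at most one of them is a
candidate and the losing events are disjoint. With the best applicant outside the first `m + K`
positions, `m` is a candidate iff it is the minimum of those `m + K` ranks, which by the symmetry
`σ ↦ σ * swap s s'` happens for a `1/(m+K)` fraction of the orders.
-/

open Finset Equiv

section ArgMin

variable {α : Type*} [LinearOrder α]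

theorem eq_of_isMinOn_perm {σ : Perm α} {S : Set α} {s s' : α} (hs : s ∈ S) (hs' : s' ∈ S)
    (h : IsMinOn σ S s) (h' : IsMinOn σ S s') : s = s' :=
  σ.injective (le_antisymm (isMinOn_iff.1 h s' hs') (isMinOn_iff.1 h' s hs))

variable [DecidableEq α]

theorem isMinOn_mul_swap_iff {S : Set α} {s s' : α} (hs : s ∈ S) (hs' : s' ∈ S) (σ : Perm α) :
    IsMinOn (σ * swap s s') S s' ↔ IsMinOn σ S s := by
  simp only [isMinOn_iff, Perm.mul_apply, swap_apply_right]
  exact ((swap_bijOn_self (iff_of_true hs hs')).forall (p := fun x => σ s ≤ σ x)).symm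

variable [Fintype α]

open scoped Classical in
theorem card_filter_isMinOn_eq {S : Set α} {s s' : α} (hs : s ∈ S) (hs' : s' ∈ S)
    (Q : Perm α → Prop) [DecidablePred Q] (hQ : ∀ σ, Q (σ * swap s s') ↔ Q σ) :
    #{σ | Q σ ∧ IsMinOn σ S s} = #{σ | Q σ ∧ IsMinOn σ S s'} := by
  refine card_nbij' (· * swap s s') (· * swap s s') ?_ ?_ ?_ ?_
  · intro σ hσ
    simp only [coe_filter, mem_univ, true_and, Set.mem_ofPred_eq] at hσ ⊢
    exact ⟨(hQ σ).2 hσ.1, (isMinOn_mul_swap_iff hs hs' σ).2 hσ.2⟩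
  · intro σ hσ
    simp only [coe_filter, mem_univ, true_and, Set.mem_ofPred_eq] at hσ ⊢
    refine ⟨(hQ σ).2 hσ.1, ?_⟩
    rw [swap_comm]
    exact (isMinOn_mul_swap_iff hs' hs σ).2 hσ.2
  · intro σ _; simp [mul_assoc]
  · intro σ _; simp [mul_assoc]

open scoped Classical in
theorem card_mul_card_filter_isMinOn (S : Finset α) {s₀ : α} (hs₀ : s₀ ∈ S)
    (Q : Perm α → Prop) [DecidablePred Q]
    (hQ : ∀ σ, ∀ s ∈ S, ∀ s' ∈ S, Q (σ * swap s s') ↔ Q σ) :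
    #S * #{σ | Q σ ∧ IsMinOn σ S s₀} = #{σ | Q σ} := by
  have hunion : ({σ | Q σ} : Finset (Perm α))
      = S.biUnion fun s => {σ | Q σ ∧ IsMinOn σ S s} := by
    ext σ
    simp only [mem_filter, mem_univ, true_and, mem_biUnion]
    constructor
    · intro hσ
      obtain ⟨s, hs, hmin⟩ := S.exists_min_image σ ⟨s₀, hs₀⟩
      exact ⟨s, hs, hσ, isMinOn_iff.2 hmin⟩
    · rintro ⟨s, -, hσ, -⟩
      exact hσ
  have hdisj : (S : Set α).PairwiseDisjoint fun s => ({σ | Q σ ∧ IsMinOn σ S s} : Finset _) := by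
    intro s hs s' hs' hne
    simp only [Function.onFun, disjoint_left, mem_filter, mem_univ, true_and]
    exact fun σ h h' => hne (eq_of_isMinOn_perm hs hs' h.2 h'.2)
  rw [hunion, card_biUnion hdisj, sum_const_nat fun s hs =>
    card_filter_isMinOn_eq hs hs₀ Q (hQ · s hs s₀ hs₀)]

end ArgMin

theorem cast_div_eq_one_div_of_mul_eq {a b n : ℕ} (h : a * b = n) (hn : n ≠ 0) :
    (b : ℚ) / n = 1 / a := by
  subst h
  have ha : (a : ℚ) ≠ 0 := by exact_mod_cast left_ne_zero_of_mul hn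
  have hb : (b : ℚ) ≠ 0 := by exact_mod_cast right_ne_zero_of_mul hn
  push_cast
  field_simp

theorem sum_filter_add_le_eq_sum_Icc {N K : ℕ} {M : Type*} [AddCommMonoid M] (f : ℕ → M)
    (p : Fin N) :
    ∑ m ∈ ({m : Fin N | (m : ℕ) + K ≤ p} : Finset (Fin N)), f m
      = ∑ i ∈ Icc 1 (p + 1 - K), f (i - 1) := by
  have hrange : ({m ∈ range N | m + K ≤ p} : Finset ℕ) = range (p + 1 - K) := by
    ext m
    simp only [mem_filter, mem_range]
    omega
  rw [sum_filter, Fin.sum_univ_eq_sum_range (fun m => if m + K ≤ p then f m else 0),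
    ← sum_filter, hrange, ← Ico_add_one_right_eq_Icc, sum_Ico_eq_sum_range]
  simp

section SlidingWindow

variable {N K : ℕ}

theorem isMinOn_univ_iff_val_eq_zero {σ : Perm (Fin N)} {p : Fin N} :
    IsMinOn σ Set.univ p ↔ (σ p : ℕ) = 0 := by
  rw [isMinOn_univ_iff]
  constructor
  · intro h
    have := h (σ.symm ⟨0, p.pos⟩)
    rw [Equiv.apply_symm_apply, Fin.le_def] at this
    exact Nat.le_zero.1 this
  · intro h x
    rw [Fin.le_def, h]
    exact Nat.zero_le _

open scoped Classical in
theorem card_mul_card_filter_val_apply_eq_zero (p : Fin N) :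
    N * #{σ : Perm (Fin N) | (σ p : ℕ) = 0} = N.factorial := by
  have h := card_mul_card_filter_isMinOn univ (mem_univ p) (fun _ => True) (by simp)
  simpa only [true_and, coe_univ, isMinOn_univ_iff_val_eq_zero, filter_true, card_univ,
    Fintype.card_perm, Fintype.card_fin] using h

theorem isCandidate_iff_isMinOn {σ : Perm (Fin N)} {m : Fin N} :
    IsCandidate N K σ m ↔ IsMinOn σ {t | (t : ℕ) < m + K} m := by
  rw [isMinOn_iff]
  refine ⟨fun h t ht => ?_, fun h t ht htm => ?_⟩
  · rcases eq_or_ne t m with rfl | htm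
    · exact le_rfl
    · exact (h t ht htm).le
  · exact (h t ht).lt_of_ne fun he => htm (σ.injective he.symm)

open scoped Classical in
theorem card_mul_card_filter_isCandidate (hK : 0 < K) {m p : Fin N} (hmp : (m : ℕ) + K ≤ p) :
    ((m : ℕ) + K) * #{σ : Perm (Fin N) | (σ p : ℕ) = 0 ∧ IsCandidate N K σ m}
      = #{σ : Perm (Fin N) | (σ p : ℕ) = 0} := by
  have hpS : p ∉ ({t : Fin N | (t : ℕ) < m + K} : Finset (Fin N)) := by simpa using hmp
  have h := card_mul_card_filter_isMinOn ({t | (t : ℕ) < m + K} : Finset (Fin N)) (s₀ := m)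
    (by simpa using hK) (fun σ => (σ p : ℕ) = 0) fun σ s hs s' hs' => by
      rw [Perm.mul_apply, swap_apply_of_ne_of_ne (ne_of_mem_of_not_mem hs hpS).symm
        (ne_of_mem_of_not_mem hs' hpS).symm]
  simp only [coe_filter, mem_univ, true_and, ← isCandidate_iff_isMinOn] at h
  rwa [Fin.card_filter_val_lt, min_eq_right (hmp.trans p.is_lt.le)] at h

theorem isCandidate_of_val_apply_eq_zero {σ : Perm (Fin N)} {p : Fin N} (hp : (σ p : ℕ) = 0) :
    IsCandidate N K σ p :=
  isCandidate_iff_isMinOn.2 ((isMinOn_univ_iff_val_eq_zero.2 hp).on_subset (Set.subset_univ _))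

theorem not_isCandidate_of_lt_add {σ : Perm (Fin N)} {m p : Fin N} (hp : (σ p : ℕ) = 0)
    (hmp : m ≠ p) (hpm : (p : ℕ) < m + K) : ¬ IsCandidate N K σ m := fun h => by
  have := h p hpm hmp.symm
  rw [Fin.lt_def, hp] at this
  exact Nat.not_lt_zero _ this

theorem winD0_iff (hK : 0 < K) {σ : Perm (Fin N)} {p : Fin N} (hp : (σ p : ℕ) = 0) :
    WinD0 N K σ ↔ ∀ m : Fin N, (m : ℕ) + K ≤ p → ¬ IsCandidate N K σ m := by
  constructor
  · rintro ⟨m₀, -, h0, hfirst⟩ m hm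
    obtain rfl : m₀ = p := σ.injective (Fin.ext (h0.trans hp.symm))
    exact hfirst m (by omega)
  · intro h
    refine ⟨p, isCandidate_of_val_apply_eq_zero hp, hp, fun m hmp => ?_⟩
    rcases le_or_gt ((m : ℕ) + K) p with hle | hgt
    · exact h m hle
    · exact not_isCandidate_of_lt_add hp (Fin.ne_of_lt hmp) hgt

/-- `b + K < N ≤ 2 * K` forces `b < K`, so `a` and `b` lie in each other's windows. -/
theorem not_isCandidate_of_isCandidate_of_lt (h2K : N ≤ 2 * K) {σ : Perm (Fin N)} {a b : Fin N}
    (hab : a < b) (hb : (b : ℕ) + K < N) (ha : IsCandidate N K σ a) : ¬ IsCandidate N K σ b :=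
  fun hb' => lt_asymm (ha b (by omega) hab.ne') (hb' a (by omega) hab.ne)

open scoped Classical in
theorem card_filter_winD0_add_sum_card_filter_isCandidate (hK : 0 < K) (h2K : N ≤ 2 * K)
    (p : Fin N) :
    #{σ : Perm (Fin N) | (σ p : ℕ) = 0 ∧ WinD0 N K σ}
      + ∑ m ∈ ({m : Fin N | (m : ℕ) + K ≤ p} : Finset (Fin N)),
          #{σ : Perm (Fin N) | (σ p : ℕ) = 0 ∧ IsCandidate N K σ m}
      = #{σ : Perm (Fin N) | (σ p : ℕ) = 0} := by
  set T : Finset (Fin N) := {m | (m : ℕ) + K ≤ p}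
  set B : Fin N → Finset (Perm (Fin N)) := fun m => {σ | (σ p : ℕ) = 0 ∧ IsCandidate N K σ m}
  have hdisj : (T : Set (Fin N)).PairwiseDisjoint B := by
    intro a ha b hb hne
    simp only [T, coe_filter, mem_univ, true_and, Set.mem_ofPred_eq] at ha hb
    simp only [B, Function.onFun, disjoint_left, mem_filter, mem_univ, true_and]
    intro σ hσa hσb
    rcases lt_or_gt_of_ne hne with hab | hba
    · exact not_isCandidate_of_isCandidate_of_lt h2K hab (by omega) hσa.2 hσb.2
    · exact not_isCandidate_of_isCandidate_of_lt h2K hba (by omega) hσb.2 hσa.2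
  have hlose : ({σ : Perm (Fin N) | (σ p : ℕ) = 0} : Finset _).filter (¬ WinD0 N K ·)
      = T.biUnion B := by
    ext σ
    simp only [T, B, mem_filter, mem_univ, true_and, mem_biUnion]
    constructor
    · rintro ⟨hp, hlost⟩
      rw [winD0_iff hK hp] at hlost
      push Not at hlost
      obtain ⟨m, hm, hc⟩ := hlost
      exact ⟨m, hm, hp, hc⟩
    · rintro ⟨m, hm, hp, hc⟩
      exact ⟨hp, fun hw => (winD0_iff hK hp).1 hw m hm hc⟩
  rw [← card_biUnion hdisj, ← hlose, ← filter_filter, card_filter_add_card_filter_not]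

open scoped Classical in
theorem card_filter_eq_sum_card_filter_val_apply_eq_zero (hN : 0 < N)
    (P : Perm (Fin N) → Prop) :
    #{σ : Perm (Fin N) | P σ} = ∑ p : Fin N, #{σ : Perm (Fin N) | (σ p : ℕ) = 0 ∧ P σ} := by
  rw [card_eq_sum_card_fiberwise (f := fun σ : Perm (Fin N) => σ.symm ⟨0, hN⟩)
    (t := univ) fun _ _ => mem_coe.2 (mem_univ _)]
  refine sum_congr rfl fun p _ => ?_
  rw [filter_filter]
  refine congrArg card (filter_congr fun σ _ => ?_)
  rw [symm_apply_eq, and_comm, Fin.ext_iff, eq_comm]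

open scoped Classical in
theorem card_filter_winD0_div_factorial (hK : 0 < K) (h2K : N ≤ 2 * K) (p : Fin N) :
    (#{σ : Perm (Fin N) | (σ p : ℕ) = 0 ∧ WinD0 N K σ} : ℚ) / N.factorial
      = 1 / N * (1 - ∑ m ∈ Icc 1 (p + 1 - K), 1 / ((m : ℚ) + K - 1)) := by
  have hF : N.factorial ≠ 0 := N.factorial_ne_zero
  have hbest := card_mul_card_filter_val_apply_eq_zero p
  have hcand : ∀ m ∈ ({m : Fin N | (m : ℕ) + K ≤ p} : Finset (Fin N)),
      (#{σ : Perm (Fin N) | (σ p : ℕ) = 0 ∧ IsCandidate N K σ m} : ℚ) / N.factorial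
        = 1 / N * (1 / ((m : ℕ) + K : ℚ)) := by
    intro m hm
    rw [cast_div_eq_one_div_of_mul_eq (a := N * (m + K)) (by
      rw [mul_assoc, card_mul_card_filter_isCandidate hK (by simpa using hm), hbest]) hF,
      one_div_mul_one_div]
    norm_cast
  have hwin : (#{σ : Perm (Fin N) | (σ p : ℕ) = 0 ∧ WinD0 N K σ} : ℚ)
      = #{σ : Perm (Fin N) | (σ p : ℕ) = 0}
        - ∑ m ∈ ({m : Fin N | (m : ℕ) + K ≤ p} : Finset (Fin N)),
            (#{σ : Perm (Fin N) | (σ p : ℕ) = 0 ∧ IsCandidate N K σ m} : ℚ) := by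
    rw [← card_filter_winD0_add_sum_card_filter_isCandidate hK h2K p]
    push_cast
    ring
  rw [hwin, sub_div, cast_div_eq_one_div_of_mul_eq hbest hF, sum_div, sum_congr rfl hcand,
    ← mul_sum, sum_filter_add_le_eq_sum_Icc (fun m => 1 / ((m : ℚ) + K)), mul_sub, mul_one]
  congr 2
  refine sum_congr rfl fun i hi => ?_
  rw [Nat.cast_sub (mem_Icc.1 hi).1]
  ring

end SlidingWindow

open scoped Classical in
/-- Best-1 sliding-window secretary problem with window size `K ≥ N/2` and threshold
`d = 0`: the probability of winning equals
`K/N + (1/N)·Σ_{j=K+1}^{N} (1 − Σ_{m=1}^{j-K} 1/(m+K−1))`. -/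
theorem stmt6 (N K : ℕ) (hK1 : 1 ≤ K) (hKN : K ≤ N) (h2K : N ≤ 2 * K) :
    ((Finset.univ.filter (fun σ : Equiv.Perm (Fin N) => WinD0 N K σ)).card : ℚ)
        / (Nat.factorial N)
      = (K : ℚ) / (N : ℚ) + (1 / (N : ℚ)) *
          ∑ j ∈ Finset.Icc (K + 1) N,
            (1 - ∑ m ∈ Finset.Icc 1 (j - K), 1 / ((m : ℚ) + (K : ℚ) - 1)) := by
  -- `win j` is the winning probability jointly with the best applicant at the paper's
  -- 1-based index `j`, i.e. at the position `p = j - 1`.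
  set win : ℕ → ℚ := fun j => 1 / N * (1 - ∑ m ∈ Icc 1 (j - K), 1 / ((m : ℚ) + K - 1))
  have hearly : ∀ p ∈ range K, win (p + 1) = 1 / N := fun p hp => by
    simp [win, Nat.sub_eq_zero_of_le (mem_range.1 hp)]
  rw [card_filter_eq_sum_card_filter_val_apply_eq_zero (lt_of_lt_of_le hK1 hKN), Nat.cast_sum,
    sum_div,
    sum_congr rfl fun p _ => card_filter_winD0_div_factorial hK1 h2K p,
    Fin.sum_univ_eq_sum_range (fun p => win (p + 1)), ← sum_range_add_sum_Ico _ hKN,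
    sum_congr rfl hearly, sum_Ico_add' win, Ico_add_one_right_eq_Icc, mul_sum, sum_const,
    card_range, nsmul_eq_mul, mul_one_div]
end

section
/- For x ∈ (1/2, 1]: x + ∫_x^1 (1 − ∫_0^{z−x} 1/(x+y) dy) dz = 2 − x + ln x. -/
open Real intervalIntegral

lemma integral_one_div_add_of_pos {x z : ℝ} (hx : 0 < x) (hz : 0 < z) :
    ∫ y in (0 : ℝ)..(z - x), 1 / (x + y) = log (z / x) := by
  rw [integral_comp_add_left (fun u => 1 / u) x, add_zero, add_sub_cancel,
    integral_one_div_of_pos hx hz]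

lemma integral_one_sub_log_div {a b : ℝ} (ha : 0 < a) (hb : 0 < b) :
    ∫ z in a..b, (1 - log (z / a)) = 2 * (b - a) - b * log (b / a) := by
  have hlog_div : ∀ z ∈ Set.uIcc a b, 1 - log (z / a) = (1 + log a) - log z := fun z hz => by
    have hz : 0 < z := lt_of_lt_of_le (lt_min ha hb) hz.1
    rw [log_div hz.ne' ha.ne']
    ring
  rw [integral_congr hlog_div, integral_sub intervalIntegrable_const intervalIntegrable_log',
    integral_const, integral_log, log_div hb.ne' ha.ne', smul_eq_mul]
  ring

/-- For `x ∈ (1/2, 1]`: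
`x + ∫_x^1 (1 − ∫_0^{z−x} 1/(x+y) dy) dz = 2 − x + ln x`. -/
theorem stmt8 (x : ℝ) (hx : x ∈ Set.Ioc (1/2 : ℝ) 1) :
    x + ∫ z in x..(1 : ℝ), (1 - ∫ y in (0 : ℝ)..(z - x), 1 / (x + y))
      = 2 - x + Real.log x := by
  have hx0 : 0 < x := lt_trans one_half_pos hx.1
  have hinner : ∀ z ∈ Set.uIcc x (1 : ℝ),
      1 - ∫ y in (0 : ℝ)..(z - x), 1 / (x + y) = 1 - log (z / x) := fun z hz => by
    have hz : 0 < z := lt_of_lt_of_le (lt_min hx0 one_pos) hz.1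
    rw [integral_one_div_add_of_pos hx0 hz]
  rw [integral_congr hinner, integral_one_sub_log_div hx0 one_pos, one_div, log_inv]
  ring
end

section
/- In the classical secretary problem with N applicants and threshold d (1 ≤ d < N), the probability of selecting the best applicant with the strategy 'reject the first d, then accept the first applicant better than all predecessors' equals (d/N) Σ_{j=d+1}^{N} 1/(j−1). -/
/-- In the classical secretary problem (0-indexed positions, smaller rank better),
position `m` is a *record* if its rank beats all earlier positions. -/
def IsRecord (N : ℕ) (σ : Equiv.Perm (Fin N)) (m : Fin N) : Prop :=
  ∀ t : Fin N, (t : ℕ) < (m : ℕ) → σ m < σ t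

/-- The strategy "reject the first `d`, then accept the first applicant better than all
predecessors" wins iff the first record at a position `≥ d` is the overall best. -/
def ClassicalWin (N d : ℕ) (σ : Equiv.Perm (Fin N)) : Prop :=
  ∃ m : Fin N, d ≤ (m : ℕ) ∧ IsRecord N σ m ∧ (σ m : ℕ) = 0 ∧
    ∀ m' : Fin N, d ≤ (m' : ℕ) → (m' : ℕ) < (m : ℕ) → ¬ IsRecord N σ m'

/-!
If the best applicant sits at position `m ≥ d`, the strategy wins exactly when the best of the
first `m` applicants sits among the first `d` positions. Right multiplication by a transposition
of two of the first `m` positions fixes the position of the best applicant and moves the minimiser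
of the first `m` ranks from one of them to the other, so that minimiser is uniformly distributed
over the first `m` positions and the win has conditional probability `d / m`. The best applicant
is at each position with probability `1 / N`; summing over `m` gives `(d / N) ∑_{m=d}^{N-1} 1 / m`.
-/

open Finset Equiv
open scoped Classical Nat

namespace Equiv.Perm

variable {α : Type*}

theorem card_filter_apply_eq_mul_card [Fintype α] [DecidableEq α] (a b : α) :
    #{σ : Perm α | σ a = b} * Fintype.card α = (Fintype.card α)! := by
  have hfiber (c : α) : #{σ : Perm α | σ a = c} = #{σ : Perm α | σ a = b} :=
    card_nbij' (swap c b * ·) (swap c b * ·) (fun σ hσ => by simp_all) (fun σ hσ => by simp_all)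
      (fun σ _ => swap_mul_self_mul c b σ) (fun σ _ => swap_mul_self_mul c b σ)
  calc #{σ : Perm α | σ a = b} * Fintype.card α = ∑ c, #{σ : Perm α | σ a = c} := by
        rw [sum_const_nat fun c _ => hfiber c, card_univ, mul_comm]
    _ = (Fintype.card α)! := by
        rw [← card_eq_sum_card_fiberwise (f := fun σ : Perm α => σ a) (s := univ) (t := univ)
          (fun σ _ => mem_univ _), card_univ, Fintype.card_perm]

variable [LinearOrder α]

theorem eq_of_isMinOn {σ : Perm α} {s : Set α} {p q : α} (hp : p ∈ s) (hq : q ∈ s)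
    (hpmin : IsMinOn σ s p) (hqmin : IsMinOn σ s q) : p = q :=
  σ.injective ((isMinOn_iff.1 hpmin q hq).antisymm (isMinOn_iff.1 hqmin p hp))

theorem isMinOn_mul_swap {σ : Perm α} {s : Set α} {p q : α} (hp : p ∈ s) (hq : q ∈ s)
    (h : IsMinOn σ s p) : IsMinOn (σ * swap p q) s q := by
  rw [isMinOn_iff] at h ⊢
  intro x hx
  rw [mul_apply, mul_apply, swap_apply_right]
  apply h
  rw [swap_apply_def]
  split_ifs <;> assumption

variable [Fintype α] {s : Finset α} {m b : α}

theorem card_filter_isMinOn_eq (hm : m ∉ s) {p q : α} (hp : p ∈ s) (hq : q ∈ s) :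
    #{σ : Perm α | σ m = b ∧ IsMinOn σ s p} = #{σ : Perm α | σ m = b ∧ IsMinOn σ s q} := by
  have hswap : swap p q m = m :=
    swap_apply_of_ne_of_ne (ne_of_mem_of_not_mem hp hm).symm (ne_of_mem_of_not_mem hq hm).symm
  refine card_nbij' (· * swap p q) (· * swap p q) ?_ ?_ (fun σ _ => by simp [mul_assoc])
    (fun σ _ => by simp [mul_assoc])
  · rintro σ hσ
    simp only [coe_filter, mem_univ, true_and, Set.mem_ofPred_eq] at hσ ⊢
    exact ⟨by rw [mul_apply, hswap, hσ.1], isMinOn_mul_swap (mem_coe.2 hp) (mem_coe.2 hq) hσ.2⟩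
  · rintro σ hσ
    simp only [coe_filter, mem_univ, true_and, Set.mem_ofPred_eq] at hσ ⊢
    refine ⟨by rw [mul_apply, hswap, hσ.1], ?_⟩
    rw [swap_comm]
    exact isMinOn_mul_swap (mem_coe.2 hq) (mem_coe.2 hp) hσ.2

theorem card_filter_exists_isMinOn (P : Perm α → Prop) [DecidablePred P] {t : Finset α}
    (ht : t ⊆ s) :
    #{σ : Perm α | P σ ∧ ∃ p ∈ t, IsMinOn σ s p} =
      ∑ p ∈ t, #{σ : Perm α | P σ ∧ IsMinOn σ s p} := by
  rw [← card_biUnion]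
  · congr 1
    ext σ
    simp only [mem_filter, mem_univ, true_and, mem_biUnion]
    exact ⟨fun ⟨hP, p, hp, hmin⟩ => ⟨p, hp, hP, hmin⟩, fun ⟨p, hp, hP, hmin⟩ => ⟨hP, p, hp, hmin⟩⟩
  · intro p hp q hq hpq
    rw [Function.onFun, disjoint_filter]
    rintro σ - ⟨-, hpmin⟩ ⟨-, hqmin⟩
    exact hpq (eq_of_isMinOn (ht hp) (ht hq) hpmin hqmin)

theorem card_filter_exists_isMinOn_mul_card (hm : m ∉ s) {t : Finset α} (ht : t ⊆ s) :
    #{σ : Perm α | σ m = b ∧ ∃ p ∈ t, IsMinOn σ s p} * #s = #t * #{σ : Perm α | σ m = b} := by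
  rcases s.eq_empty_or_nonempty with rfl | ⟨p₀, hp₀⟩
  · simp [subset_empty.1 ht]
  have hall : #{σ : Perm α | σ m = b} = #{σ : Perm α | σ m = b ∧ ∃ p ∈ s, IsMinOn σ s p} := by
    congr 1
    ext σ
    obtain ⟨p, hp, hpmin⟩ := s.exists_min_image σ ⟨p₀, hp₀⟩
    simpa using fun _ => ⟨p, hp, isMinOn_iff.2 hpmin⟩
  have hconst (p : α) (hp : p ∈ s) := card_filter_isMinOn_eq (b := b) hm hp hp₀
  rw [hall, card_filter_exists_isMinOn (· m = b) ht,
    card_filter_exists_isMinOn (· m = b) subset_rfl, sum_const_nat fun p hp => hconst p (ht hp),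
    sum_const_nat hconst]
  ring

end Equiv.Perm

variable {N d : ℕ}

theorem isRecord_of_isMinOn {σ : Perm (Fin N)} {m p : Fin N} (hpm : p < m)
    (hp : IsMinOn σ ↑(Iio m) p) : IsRecord N σ p := by
  intro t htp
  have htm : t ∈ Iio m := mem_Iio.2 ((Fin.lt_def.2 htp).trans hpm)
  exact (isMinOn_iff.1 hp t htm).lt_of_ne (σ.injective.ne (Fin.ne_of_gt htp))

theorem classicalWin_iff (hd : 1 ≤ d) {σ : Perm (Fin N)} {m : Fin N} (hm : (σ m : ℕ) = 0) :
    ClassicalWin N d σ ↔ d ≤ m ∧ ∃ p : Fin N, (p : ℕ) < d ∧ IsMinOn σ ↑(Iio m) p := by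
  constructor
  · rintro ⟨m', hdm', -, hm', hfirst⟩
    obtain rfl : m' = m := σ.injective (Fin.ext (hm'.trans hm.symm))
    refine ⟨hdm', ?_⟩
    have hne : (Iio m').Nonempty := ⟨⟨0, by omega⟩, mem_Iio.2 (Fin.lt_def.2 (by dsimp only; omega))⟩
    obtain ⟨p, hp, hpmin⟩ := (Iio m').exists_min_image σ hne
    have hpm := mem_Iio.1 hp
    refine ⟨p, not_le.1 fun hdp => hfirst p hdp hpm ?_, isMinOn_iff.2 hpmin⟩
    exact isRecord_of_isMinOn hpm (isMinOn_iff.2 hpmin)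
  · rintro ⟨hdm, p, hpd, hpmin⟩
    refine ⟨m, hdm, fun t _ => ?_, hm, fun m' hdm' hm'm hrec => ?_⟩
    · have : σ t ≠ σ m := σ.injective.ne (by omega)
      rw [Fin.lt_def]
      omega
    · exact (hrec p (by omega)).not_ge (isMinOn_iff.1 hpmin m' (mem_Iio.2 hm'm))

theorem card_classicalWin_and_apply_mul (hd : 1 ≤ d) {z m : Fin N} (hz : (z : ℕ) = 0)
    (hdm : d ≤ m) :
    #{σ : Perm (Fin N) | ClassicalWin N d σ ∧ σ m = z} * m =
      d * #{σ : Perm (Fin N) | σ m = z} := by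
  have hwin : ({σ | ClassicalWin N d σ ∧ σ m = z} : Finset (Perm (Fin N))) =
      ({σ | σ m = z ∧ ∃ p ∈ ({p | (p : ℕ) < d} : Finset (Fin N)), IsMinOn σ ↑(Iio m) p} :
        Finset (Perm (Fin N))) := by
    ext σ
    simp only [mem_filter, mem_univ, true_and]
    constructor
    · rintro ⟨hw, rfl⟩
      exact ⟨rfl, ((classicalWin_iff hd hz).1 hw).2⟩
    · rintro ⟨rfl, hmin⟩
      exact ⟨(classicalWin_iff hd hz).2 ⟨hdm, hmin⟩, rfl⟩
  have hsub : ({p | (p : ℕ) < d} : Finset (Fin N)) ⊆ Iio m := fun p hp =>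
    mem_Iio.2 (Fin.lt_def.2 ((mem_filter.1 hp).2.trans_le hdm))
  have hcount := Perm.card_filter_exists_isMinOn_mul_card (b := z) notMem_Iio_self hsub
  rw [Fin.card_Iio, Fin.card_filter_val_lt, min_eq_right (hdm.trans m.is_lt.le)] at hcount
  rw [hwin]
  -- the two filters differ only in their `Decidable` instances
  convert hcount

theorem card_classicalWin_and_apply_div (hd : 1 ≤ d) {z : Fin N} (hz : (z : ℕ) = 0) (m : Fin N) :
    (#{σ : Perm (Fin N) | ClassicalWin N d σ ∧ σ m = z} : ℚ) / N ! =
      if d ≤ m then (d : ℚ) / (m * N) else 0 := by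
  split_ifs with hdm
  · have hwin := card_classicalWin_and_apply_mul hd hz hdm
    have hfiber := Perm.card_filter_apply_eq_mul_card m z
    rw [Fintype.card_fin] at hfiber
    have hm : (m : ℚ) ≠ 0 := by norm_cast; omega
    have hN : (N : ℚ) ≠ 0 := by norm_cast; omega
    rw [div_eq_div_iff (by positivity) (mul_ne_zero hm hN), ← hfiber]
    norm_cast
    rw [← mul_assoc, hwin, mul_assoc]
  · have hlose (σ : Perm (Fin N)) : ¬(ClassicalWin N d σ ∧ σ m = z) := fun ⟨hwin, hσ⟩ =>
      hdm ((classicalWin_iff hd (by rw [hσ, hz])).1 hwin).1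
    rw [filter_false_of_mem fun σ _ => hlose σ, card_empty, Nat.cast_zero, zero_div]

theorem sum_ite_div_eq_div_mul_sum_Icc (d N : ℕ) :
    ∑ m : Fin N, (if d ≤ (m : ℕ) then (d : ℚ) / (m * N) else 0) =
      d / N * ∑ j ∈ Icc (d + 1) N, 1 / ((j : ℚ) - 1) := by
  have hIco : ({m ∈ range N | d ≤ m} : Finset ℕ) = Ico d N := by
    ext
    simp only [mem_filter, mem_range, mem_Ico]
    omega
  rw [Fin.sum_univ_eq_sum_range (fun m => if d ≤ m then (d : ℚ) / (m * N) else 0), ← sum_filter,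
    hIco, ← Ico_add_one_right_eq_Icc, ← sum_Ico_add', mul_sum]
  refine sum_congr rfl fun m _ => ?_
  push_cast
  ring

open scoped Classical in
/-- Classical secretary problem with `N` applicants and threshold `d` (`1 ≤ d < N`): the
probability of selecting the best applicant equals `(d/N)·Σ_{j=d+1}^{N} 1/(j−1)`. -/
theorem stmt10 (N d : ℕ) (hd : 1 ≤ d) (hdN : d < N) :
    ((Finset.univ.filter (fun σ : Equiv.Perm (Fin N) => ClassicalWin N d σ)).card : ℚ)
        / (Nat.factorial N)
      = ((d : ℚ) / (N : ℚ)) * ∑ j ∈ Finset.Icc (d + 1) N, 1 / ((j : ℚ) - 1) := by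
  let z : Fin N := ⟨0, by omega⟩
  have hbest : #{σ : Perm (Fin N) | ClassicalWin N d σ} =
      ∑ m, #{σ : Perm (Fin N) | ClassicalWin N d σ ∧ σ m = z} := by
    rw [card_eq_sum_card_fiberwise (f := fun σ : Perm (Fin N) => σ.symm z) (t := univ)
      fun σ _ => mem_univ _]
    refine sum_congr rfl fun m _ => ?_
    rw [filter_filter]
    congr 1
    ext σ
    simp only [mem_filter, mem_univ, true_and, symm_apply_eq]
    exact and_congr_right fun _ => eq_comm
  rw [hbest, Nat.cast_sum, sum_div]
  simp only [card_classicalWin_and_apply_div hd (z := z) rfl]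
  exact sum_ite_div_eq_div_mul_sum_Icc d N
end
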